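/- The abelianization of GL₂(ℤ̂) is isomorphic to {±1} × ℤ̂^×, with the abelianization map identified with (sgn, det) : GL₂(ℤ̂) → {±1} × ℤ̂^×; in particular (sgn, det) is surjective and its kernel is the closed commutator subgroup of GL₂(ℤ̂). -/

import Mathlib

open Matrix

instance (p : Nat.Primes) : Fact (Nat.Prime p.val) := ⟨p.2⟩

/-- `GL₂(ℤ̂)`, presented via `ℤ̂ ≅ ∏_ℓ ℤ_ℓ` as the product of the groups `GL₂(ℤ_ℓ)`. -/
abbrev GL2Zhat : Type := ∀ p : Nat.Primes, GL (Fin 2) ℤ_[p.val]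

/-- `ℤ̂ˣ`, presented as `∏_ℓ ℤ_ℓˣ`. -/
abbrev ZhatUnits : Type := ∀ p : Nat.Primes, ℤ_[p.val]ˣ

/-- The permutation of vectors induced by an invertible matrix. -/
def glToPerm {R : Type*} [CommRing R] (g : GL (Fin 2) R) : Equiv.Perm (Fin 2 → R) where
  toFun v := g.val.mulVec v
  invFun v := (g⁻¹).val.mulVec v
  left_inv v := by
    show (g⁻¹).val.mulVec (g.val.mulVec v) = v
    rw [Matrix.mulVec_mulVec, ← Units.val_mul, inv_mul_cancel, Units.val_one, Matrix.one_mulVec]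
  right_inv v := by
    show g.val.mulVec ((g⁻¹).val.mulVec v) = v
    rw [Matrix.mulVec_mulVec, ← Units.val_mul, mul_inv_cancel, Units.val_one, Matrix.one_mulVec]

def glPermHom (R : Type*) [CommRing R] : GL (Fin 2) R →* Equiv.Perm (Fin 2 → R) where
  toFun := glToPerm
  map_one' := by ext v; simp [glToPerm]
  map_mul' g h := by
    ext v : 1
    show (g * h).val.mulVec v = g.val.mulVec (h.val.mulVec v)
    rw [Matrix.mulVec_mulVec, Units.val_mul]

/-- The sign character on `GL₂(𝔽₂) ≅ S₃`, via the permutation action on `𝔽₂²`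
(the zero vector being a fixed point). -/
noncomputable def sgnF2 : GL (Fin 2) (ZMod 2) →* ℤˣ :=
  Equiv.Perm.sign.comp (glPermHom (ZMod 2))

/-- The projection `GL₂(ℤ̂) → GL₂(ℤ_ℓ)`. -/
noncomputable def projGL (p : Nat.Primes) : GL2Zhat →* GL (Fin 2) ℤ_[p.val] :=
  Pi.evalMonoidHom (fun p : Nat.Primes => GL (Fin 2) ℤ_[p.val]) p

/-- The sign map on `GL₂(ℤ̂)`: projection to `GL₂(ℤ₂)`, reduction mod 2, then the
sign character on `GL₂(𝔽₂) ≅ S₃`. -/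
noncomputable def sgnHat : GL2Zhat →* ℤˣ :=
  (sgnF2.comp (Matrix.GeneralLinearGroup.map (PadicInt.toZMod (p := 2)))).comp
    (projGL ⟨2, Nat.prime_two⟩)

/-- The determinant map `GL₂(ℤ̂) → ℤ̂ˣ`. -/
noncomputable def detHat : GL2Zhat →* ZhatUnits where
  toFun g := fun p => Matrix.GeneralLinearGroup.det (g p)
  map_one' := by ext p; simp
  map_mul' g h := by ext p; simp

/-!
`(sgn, det)` kills commutators and has closed kernel, so its kernel contains the closed commutator
subgroup. Conversely, every element of the kernel is, at every prime `ℓ`, a product of four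
commutators; since this bound does not depend on `ℓ`, the element is a product of four commutators
in `∏ GL₂(ℤ_ℓ)`.

A determinant-one matrix with a unit corner `a` factors as
`lowerLeft c' * diag a a⁻¹ * upperRightHom b'`, where `diag a a⁻¹ = ⁅diag a 1, weyl⁆` and
`⁅diag u 1, upperRightHom t⁆ = upperRightHom ((u - 1) * t)` (similarly for `lowerLeft`). For odd `ℓ`
take `u = 2`, so every transvection is a commutator, and in the local ring `ℤ_ℓ` one transvection
makes the corner a unit. For `ℓ = 2` take `u = 3`: this handles matrices congruent to `1` mod `2`,
and trivial sign means the reduction mod `2` lies in `A₃ ⊂ S₃ ≅ GL₂(𝔽₂)`, whose elements are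
reductions of commutators.

For surjectivity, `diag u 1` realises every determinant with trivial sign, and the transvection
`upperRightHom 1` at `2` has sign `-1` and determinant `1`.
-/

open scoped commutatorElement Pointwise
open Matrix.GeneralLinearGroup (upperRightHom)

lemma Set.univ_pi_pow_subset {ι : Type*} {M : ι → Type*} [∀ i, Monoid (M i)]
    (s : ∀ i, Set (M i)) (n : ℕ) :
    Set.univ.pi (fun i => s i ^ n) ⊆ Set.univ.pi s ^ n := by
  induction n with
  | zero =>
    intro g hg
    exact Set.mem_one.mpr (funext fun i => Set.mem_one.mp (hg i trivial))
  | succ n ih =>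
    intro g hg
    simp only [pow_succ] at hg ⊢
    choose a ha b hb hab using fun i => Set.mem_mul.mp (hg i trivial)
    exact Set.mem_mul.mpr ⟨a, ih fun i _ => ha i, b, fun i _ => hb i, funext hab⟩

lemma univ_pi_commutatorSet_subset {ι : Type*} {G : ι → Type*} [∀ i, Group (G i)] :
    Set.univ.pi (fun i => commutatorSet (G i)) ⊆ commutatorSet (∀ i, G i) := by
  intro g hg
  choose x y hxy using fun i => mem_commutatorSet_iff.mp (hg i trivial)
  exact mem_commutatorSet_iff.mpr ⟨x, y, funext hxy⟩

lemma commutatorSet_pow_subset_commutator (G : Type*) [Group G] (n : ℕ) :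
    commutatorSet G ^ n ⊆ commutator G := by
  rw [commutator_eq_closure]
  exact Subgroup.pow_subset Subgroup.subset_closure

lemma MonoidHom.map_eq_one_of_mem_commutatorSet {G A : Type*} [Group G] [CommGroup A]
    (f : G →* A) {g : G} (hg : g ∈ commutatorSet G) : f g = 1 :=
  Abelianization.commutator_subset_ker f <| by
    rw [commutator_eq_closure]
    exact Subgroup.subset_closure hg

namespace GL2

open Matrix.GeneralLinearGroup (det map)

variable {R S : Type*} [CommRing R] [CommRing S]

def lowerLeft (t : R) : GL (Fin 2) R :=
  ⟨!![1, 0; t, 1], !![1, 0; -t, 1], by simp [one_fin_two], by simp [one_fin_two]⟩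

def diag (u v : Rˣ) : GL (Fin 2) R :=
  ⟨!![(u : R), 0; 0, (v : R)], !![((u⁻¹ : Rˣ) : R), 0; 0, ((v⁻¹ : Rˣ) : R)],
    by simp [one_fin_two], by simp [one_fin_two]⟩

def weyl : GL (Fin 2) R :=
  ⟨!![0, 1; -1, 0], !![0, -1; 1, 0], by simp [one_fin_two], by simp [one_fin_two]⟩

lemma commutator_diag_upperRightHom (u : Rˣ) (t : R) :
    ⁅diag u 1, upperRightHom t⁆ = upperRightHom ((u - 1) * t) := by
  ext i j : 2
  fin_cases i <;> fin_cases j <;>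
    simp [commutatorElement_def, diag, Units.inv_mk]
  ring

lemma commutator_diag_lowerLeft (u : Rˣ) (t : R) :
    ⁅diag 1 u, lowerLeft t⁆ = lowerLeft ((u - 1) * t) := by
  ext i j : 2
  fin_cases i <;> fin_cases j <;>
    simp [commutatorElement_def, diag, lowerLeft, Units.inv_mk]
  ring

lemma commutator_diag_weyl (u : Rˣ) : ⁅diag u 1, weyl⁆ = diag u u⁻¹ := by
  ext i j : 2
  fin_cases i <;> fin_cases j <;>
    simp [commutatorElement_def, diag, weyl, Units.inv_mk]

lemma det_upperRightHom (t : R) : det (upperRightHom t) = 1 := by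
  ext
  simp [Matrix.det_fin_two]

lemma det_diag (u v : Rˣ) : det (diag u v) = u * v := by
  ext
  simp [diag, Matrix.det_fin_two]

lemma map_upperRightHom (f : R →+* S) (t : R) :
    map f (upperRightHom t) = upperRightHom (f t) := by
  ext i j : 2
  fin_cases i <;> fin_cases j <;> simp

lemma map_diag (f : R →+* S) (u v : Rˣ) :
    map f (diag u v) = diag (Units.map f u) (Units.map f v) := by
  ext i j : 2
  fin_cases i <;> fin_cases j <;> simp [diag]

lemma map_weyl (f : R →+* S) : map f weyl = weyl := by
  ext i j : 2
  fin_cases i <;> fin_cases j <;> simp [weyl]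

lemma det_eq_one_iff {g : GL (Fin 2) R} : det g = 1 ↔ g 0 0 * g 1 1 - g 0 1 * g 1 0 = 1 := by
  rw [← Matrix.det_fin_two, ← Matrix.GeneralLinearGroup.val_det_apply, Units.val_eq_one]

lemma upperRightHom_mul_apply_zero_zero (t : R) (g : GL (Fin 2) R) :
    (upperRightHom t * g) 0 0 = g 0 0 + t * g 1 0 := by
  simp [Matrix.mul_apply, Fin.sum_univ_two]

lemma eq_lowerLeft_mul_diag_mul_upperRightHom {g : GL (Fin 2) R} (hdet : det g = 1)
    (a : Rˣ) (ha : g 0 0 = a) :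
    g = lowerLeft (g 1 0 * ↑a⁻¹) * diag a a⁻¹ * upperRightHom (↑a⁻¹ * g 0 1) := by
  have hd := det_eq_one_iff.mp hdet
  ext i j : 2
  fin_cases i <;> fin_cases j <;> simp [lowerLeft, diag, ha]
  linear_combination (↑a⁻¹ : R) * hd - (↑a⁻¹ * g 1 1) * ha - g 1 1 * Units.inv_mul a

lemma mem_commutatorSet_pow_three {g : GL (Fin 2) R} (hdet : det g = 1) (ha : IsUnit (g 0 0))
    (u : Rˣ) (hb : (u - 1 : R) ∣ g 0 1) (hc : (u - 1 : R) ∣ g 1 0) :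
    g ∈ commutatorSet (GL (Fin 2) R) ^ 3 := by
  obtain ⟨a, ha⟩ := ha
  obtain ⟨b, hb⟩ := hb
  obtain ⟨c, hc⟩ := hc
  rw [eq_lowerLeft_mul_diag_mul_upperRightHom hdet a ha.symm, pow_succ, pow_two]
  refine Set.mul_mem_mul (Set.mul_mem_mul ?_ ?_) ?_
  · rw [hc, mul_assoc, ← commutator_diag_lowerLeft]
    exact commutator_mem_commutatorSet _ _
  · rw [← commutator_diag_weyl]
    exact commutator_mem_commutatorSet _ _
  · rw [hb, mul_left_comm, ← commutator_diag_upperRightHom]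
    exact commutator_mem_commutatorSet _ _

lemma mem_commutatorSet_pow_four_of_isLocalRing [IsLocalRing R] (u : Rˣ)
    (hu : IsUnit (u - 1 : R)) {g : GL (Fin 2) R} (hdet : det g = 1) :
    g ∈ commutatorSet (GL (Fin 2) R) ^ 4 := by
  obtain ⟨t, ht⟩ : ∃ t : R, IsUnit ((upperRightHom t * g) 0 0) := by
    simp only [upperRightHom_mul_apply_zero_zero]
    by_cases h : IsUnit (g 0 0)
    · exact ⟨0, by simpa⟩
    refine ⟨1, ?_⟩
    rw [← IsLocalRing.notMem_maximalIdeal, not_not] at h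
    have h10 : g 1 0 ∉ IsLocalRing.maximalIdeal R := fun h10 =>
      IsLocalRing.notMem_maximalIdeal.mpr isUnit_one <| (det_eq_one_iff.mp hdet) ▸
        sub_mem (Ideal.mul_mem_right _ _ h) (Ideal.mul_mem_left _ _ h10)
    rw [one_mul, ← IsLocalRing.notMem_maximalIdeal]
    exact fun hsum => h10 (by simpa using sub_mem hsum h)
  have hdet' : det (upperRightHom t * g) = 1 := by
    rw [map_mul, det_upperRightHom, hdet, one_mul]
  have hE : upperRightHom (-t) ∈ commutatorSet (GL (Fin 2) R) := by
    obtain ⟨v, hv⟩ := hu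
    rw [show -t = (u - 1) * (↑v⁻¹ * -t) by rw [← hv, ← mul_assoc, Units.mul_inv, one_mul],
      ← commutator_diag_upperRightHom]
    exact commutator_mem_commutatorSet _ _
  rw [← inv_mul_cancel_left (upperRightHom t) g, ← AddChar.map_neg_eq_inv, pow_succ']
  exact Set.mul_mem_mul hE (mem_commutatorSet_pow_three hdet' ht u hu.dvd hu.dvd)

lemma eq_one_or_eq_commutator_of_sgnF2_eq_one :
    ∀ u : GL (Fin 2) (ZMod 2), sgnF2 u = 1 →
      u = 1 ∨ u = ⁅(weyl : GL (Fin 2) (ZMod 2)), upperRightHom (1 : ZMod 2)⁆ ∨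
        u = ⁅upperRightHom (1 : ZMod 2), (weyl : GL (Fin 2) (ZMod 2))⁆ := by
  decide

lemma sgnF2_upperRightHom_one : sgnF2 (upperRightHom 1) = -1 := by
  decide

lemma diag_zmod_two (u v : (ZMod 2)ˣ) : diag u v = 1 := by
  revert u v
  decide

lemma exists_mem_commutatorSet_map_eq (f : R →+* ZMod 2) {u : GL (Fin 2) (ZMod 2)}
    (hu : sgnF2 u = 1) : ∃ c ∈ commutatorSet (GL (Fin 2) R), map f c = u := by
  rcases eq_one_or_eq_commutator_of_sgnF2_eq_one u hu with rfl | rfl | rfl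
  · exact ⟨1, one_mem_commutatorSet _, map_one _⟩
  · refine ⟨⁅weyl, upperRightHom 1⁆, commutator_mem_commutatorSet _ _, ?_⟩
    rw [map_commutatorElement, map_weyl, map_upperRightHom, map_one]
  · refine ⟨⁅upperRightHom 1, weyl⁆, commutator_mem_commutatorSet _ _, ?_⟩
    rw [map_commutatorElement, map_weyl, map_upperRightHom, map_one]

end GL2

namespace PadicInt

open Matrix.GeneralLinearGroup (det map)

variable {p : ℕ} [Fact p.Prime]

lemma isUnit_iff_toZMod_ne_zero {x : ℤ_[p]} : IsUnit x ↔ toZMod x ≠ 0 := by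
  rw [ne_eq, ← RingHom.mem_ker, ker_toZMod, IsLocalRing.notMem_maximalIdeal]

lemma natCast_dvd_iff_toZMod_eq_zero {x : ℤ_[p]} : (p : ℤ_[p]) ∣ x ↔ toZMod x = 0 := by
  rw [← RingHom.mem_ker, ker_toZMod, maximalIdeal_eq_span_p, Ideal.mem_span_singleton]

lemma isUnit_two_of_ne_two (hp : p ≠ 2) : IsUnit (2 : ℤ_[p]) := by
  rw [isUnit_iff, show (2 : ℤ_[p]) = (2 : ℕ) by norm_cast, norm_natCast_eq_one_iff,
    Nat.coprime_primes Fact.out Nat.prime_two]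
  exact hp

lemma continuous_toZMod : Continuous (toZMod (p := p)) := by
  refine continuous_of_continuousAt_zero (toZMod (p := p)) ?_
  rw [ContinuousAt, map_zero, nhds_discrete (ZMod p), Filter.tendsto_pure]
  filter_upwards [Metric.ball_mem_nhds (0 : ℤ_[p]) one_pos] with x hx
  rw [← RingHom.mem_ker, ker_toZMod, IsLocalRing.mem_maximalIdeal, mem_nonunits_iff,
    not_isUnit_iff]
  simpa using hx

lemma mem_commutatorSet_pow_three_of_map_toZMod_eq_one {g : GL (Fin 2) ℤ_[p]}
    (hdet : det g = 1) (hg : map toZMod g = 1) :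
    g ∈ commutatorSet (GL (Fin 2) ℤ_[p]) ^ 3 := by
  have hentry (i j : Fin 2) : toZMod (g i j) = (1 : Matrix (Fin 2) (Fin 2) (ZMod p)) i j := by
    rw [← Matrix.GeneralLinearGroup.map_apply, hg, Units.val_one]
  have hu : IsUnit (1 + p : ℤ_[p]) := by
    rw [isUnit_iff_toZMod_ne_zero, map_add, map_one, map_natCast, ZMod.natCast_self, add_zero]
    exact one_ne_zero
  refine GL2.mem_commutatorSet_pow_three hdet ?_ hu.unit ?_ ?_
  · rw [isUnit_iff_toZMod_ne_zero, hentry]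
    simp
  all_goals
    rw [IsUnit.unit_spec, add_sub_cancel_left, natCast_dvd_iff_toZMod_eq_zero, hentry]
    simp

lemma mem_commutatorSet_pow_four_of_sgnF2_eq_one {g : GL (Fin 2) ℤ_[2]} (hdet : det g = 1)
    (hsgn : sgnF2 (map toZMod g) = 1) : g ∈ commutatorSet (GL (Fin 2) ℤ_[2]) ^ 4 := by
  obtain ⟨c, hc, hcg⟩ := GL2.exists_mem_commutatorSet_map_eq toZMod hsgn
  have hdet' : det (c⁻¹ * g) = 1 := by
    rw [map_mul, map_inv, det.map_eq_one_of_mem_commutatorSet hc, hdet, inv_one, one_mul]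
  have hred : map toZMod (c⁻¹ * g) = 1 := by
    rw [map_mul, map_inv, hcg, inv_mul_cancel]
  rw [← mul_inv_cancel_left c g, pow_succ']
  exact Set.mul_mem_mul hc (mem_commutatorSet_pow_three_of_map_toZMod_eq_one hdet' hred)

end PadicInt

section GL2Zhat

open Matrix.GeneralLinearGroup (det map)

abbrev Nat.Primes.two : Nat.Primes := ⟨2, Nat.prime_two⟩

lemma sgnHat_apply (g : GL2Zhat) :
    sgnHat g = sgnF2 (map PadicInt.toZMod (g Nat.Primes.two)) :=
  rfl

lemma continuous_sgnHat : Continuous sgnHat :=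
  (continuous_of_discreteTopology (f := sgnF2)).comp
    (PadicInt.continuous_toZMod.generalLinearGroup_map.comp (continuous_apply Nat.Primes.two))

lemma continuous_detHat : Continuous detHat :=
  continuous_pi fun p => Matrix.GeneralLinearGroup.continuous_det.comp (continuous_apply p)

lemma isClosed_ker_sgnHat_prod_detHat : IsClosed ((sgnHat.prod detHat).ker : Set GL2Zhat) := by
  rw [MonoidHom.coe_ker]
  exact isClosed_singleton.preimage (continuous_sgnHat.prodMk continuous_detHat)

lemma ker_sgnHat_prod_detHat_le_commutator :
    (sgnHat.prod detHat).ker ≤ commutator GL2Zhat := by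
  intro g hg
  obtain ⟨hsgn, hdet⟩ := Prod.mk_eq_one.mp hg
  have hwidth (p : Nat.Primes) : g p ∈ commutatorSet (GL (Fin 2) ℤ_[p]) ^ 4 := by
    have hdetp : det (g p) = 1 := congrFun hdet p
    by_cases hp2 : p = Nat.Primes.two
    · subst hp2
      exact PadicInt.mem_commutatorSet_pow_four_of_sgnF2_eq_one hdetp hsgn
    · have h2 : IsUnit (2 : ℤ_[p]) := PadicInt.isUnit_two_of_ne_two fun h => hp2 (Subtype.ext h)
      exact GL2.mem_commutatorSet_pow_four_of_isLocalRing h2.unit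
        (by rw [IsUnit.unit_spec]; norm_num) hdetp
  exact commutatorSet_pow_subset_commutator _ 4 <|
    Set.pow_subset_pow_left univ_pi_commutatorSet_subset <|
      Set.univ_pi_pow_subset _ 4 fun p _ => hwidth p

lemma surjective_sgnHat_prod_detHat : Function.Surjective (sgnHat.prod detHat) := by
  have hdiag (u : ZhatUnits) : sgnHat.prod detHat (fun p => GL2.diag (u p) 1) = (1, u) := by
    refine Prod.ext ?_ (funext fun p => ?_)
    · rw [MonoidHom.prod_apply, sgnHat_apply, GL2.map_diag, GL2.diag_zmod_two, map_one]
    · exact (GL2.det_diag _ _).trans (mul_one _)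
  have htransvection :
      sgnHat.prod detHat (Pi.mulSingle Nat.Primes.two (upperRightHom 1)) = (-1, 1) := by
    refine Prod.ext ?_ (funext fun p => ?_)
    · rw [MonoidHom.prod_apply, sgnHat_apply, Pi.mulSingle_eq_same, GL2.map_upperRightHom,
        map_one, GL2.sgnF2_upperRightHom_one]
    · rw [Prod.snd, ← Pi.mulSingle_one Nat.Primes.two, ← GL2.det_upperRightHom (1 : ℤ_[2])]
      exact Pi.apply_mulSingle (fun _ => Matrix.GeneralLinearGroup.det) (fun _ => map_one _) _ _ p
  rintro ⟨ε, u⟩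
  rcases Int.units_eq_one_or ε with rfl | rfl
  · exact ⟨_, hdiag u⟩
  · refine ⟨(fun p => GL2.diag (u p) 1) * Pi.mulSingle Nat.Primes.two (upperRightHom 1), ?_⟩
    rw [map_mul, hdiag u, htransvection, Prod.mk_mul_mk, one_mul, mul_one]

end GL2Zhat

/-- The abelianization of `GL₂(ℤ̂)` is `{±1} × ℤ̂ˣ` via `(sgn, det)`: this map is
surjective, its kernel is the closed commutator subgroup, and the induced map on the
quotient by the closed commutator subgroup is an isomorphism. -/
theorem abelianization_GL2Zhat :
    Function.Surjective ⇑(sgnHat.prod detHat) ∧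
    (sgnHat.prod detHat).ker = (commutator GL2Zhat).topologicalClosure ∧
    ∃ e : (GL2Zhat ⧸ (commutator GL2Zhat).topologicalClosure) ≃* (ℤˣ × ZhatUnits),
      ∀ g : GL2Zhat, e (QuotientGroup.mk g) = (sgnHat g, detHat g) := by
  have hker : (sgnHat.prod detHat).ker = (commutator GL2Zhat).topologicalClosure :=
    le_antisymm (ker_sgnHat_prod_detHat_le_commutator.trans (Subgroup.le_topologicalClosure _))
      (Subgroup.topologicalClosure_minimal _ (Abelianization.commutator_subset_ker _)
        isClosed_ker_sgnHat_prod_detHat)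
  exact ⟨surjective_sgnHat_prod_detHat, hker,
    (QuotientGroup.quotientMulEquivOfEq hker.symm).trans
      (QuotientGroup.quotientKerEquivOfSurjective _ surjective_sgnHat_prod_detHat),
    fun _ => rfl⟩
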